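/- The inverse of the bijection Π : T_ℓ → T_{[1,ℓ]} sends the ℓ-tuple (i_1 < i_2 < ⋯ < i_ℓ) to the pair consisting of the sequence (⋯ < 0 < max(i_1,1) < ⋯ < max(i_ℓ,ℓ)) and the sequence (min(i_1,1) < ⋯ < min(i_ℓ,ℓ) < ℓ+1 < ℓ+2 < ⋯). -/

import Mathlib

attribute [local instance] Classical.propDecidable

noncomputable section

/-- `T_ℓ^+`: strictly increasing integer sequences indexed by `j ≤ ℓ` with `i_j = j`
for `j ≪ 0`. -/
def TPlus (ℓ : ℤ) : Set (Set.Iic ℓ → ℤ) :=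
  {f | StrictMono f ∧ ∃ N : ℤ, ∀ j : Set.Iic ℓ, (j : ℤ) ≤ N → f j = (j : ℤ)}

/-- `T_0^-`: strictly increasing integer sequences indexed by `p ≥ 1` with `j_p = p`
for `p ≫ 0`. -/
def TMinus : Set (Set.Ici (1 : ℤ) → ℤ) :=
  {g | StrictMono g ∧ ∃ N : ℤ, ∀ p : Set.Ici (1 : ℤ), N ≤ (p : ℤ) → g p = (p : ℤ)}

/-- `α_T = sup {p ≤ ℓ : i_p = p}`. -/
def alphaT (ℓ : ℤ) (f : Set.Iic ℓ → ℤ) : ℤ :=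
  sSup {p : ℤ | ∃ h : p ≤ ℓ, f ⟨p, h⟩ = p}

/-- `β_{T'} = inf {p ≥ 1 : j_p = p}`. -/
def betaT (g : Set.Ici (1 : ℤ) → ℤ) : ℤ :=
  sInf {p : ℤ | ∃ h : (1 : ℤ) ≤ p, g ⟨p, h⟩ = p}

/-- `T_ℓ`: pairs `T ⊗ T'` with `T ∈ T_ℓ^+`, `T' ∈ T_0^-` and `α_T ≥ β_{T'} − 1`. -/
def TL (ℓ : ℤ) : Set ((Set.Iic ℓ → ℤ) × (Set.Ici (1 : ℤ) → ℤ)) :=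
  {x | x.1 ∈ TPlus ℓ ∧ x.2 ∈ TMinus ∧ betaT x.2 - 1 ≤ alphaT ℓ x.1}

/-- `T_{[1,ℓ]}`: strictly increasing `ℓ`-tuples of integers. -/
def TRect (ℓ : ℤ) : Set (Set.Icc (1 : ℤ) ℓ → ℤ) := {h | StrictMono h}

/-- The map `Π(T ⊗ T') = (j_1 < ⋯ < j_{α_T} < i_{α_T+1} < ⋯ < i_ℓ)`. -/
def PiMap (ℓ : ℤ) (x : (Set.Iic ℓ → ℤ) × (Set.Ici (1 : ℤ) → ℤ)) :
    Set.Icc (1 : ℤ) ℓ → ℤ :=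
  fun p => if (p : ℤ) ≤ alphaT ℓ x.1 then x.2 ⟨p, p.2.1⟩ else x.1 ⟨p, p.2.2⟩

/-- The candidate inverse of `Π`, sending `(i_1 < ⋯ < i_ℓ)` to the pair of the
sequence `(⋯ < 0 < max(i_1,1) < ⋯ < max(i_ℓ,ℓ))` and the sequence
`(min(i_1,1) < ⋯ < min(i_ℓ,ℓ) < ℓ+1 < ℓ+2 < ⋯)`. -/
def PiInv (ℓ : ℤ) (h : Set.Icc (1 : ℤ) ℓ → ℤ) :
    (Set.Iic ℓ → ℤ) × (Set.Ici (1 : ℤ) → ℤ) :=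
  (fun j => if hj : 1 ≤ (j : ℤ) then max (h ⟨j, hj, j.2⟩) (j : ℤ) else (j : ℤ),
   fun p => if hp : (p : ℤ) ≤ ℓ then min (h ⟨p, p.2, hp⟩) (p : ℤ) else (p : ℤ))

/-! For a strictly increasing integer sequence `i` on an interval, `p ↦ i_p - p` is monotone.
Hence for `T ⊗ T' ∈ T_ℓ`, `T` is `≥ id` with fixed points exactly `p ≤ α_T`, `T'` is `≤ id`
with fixed points exactly `p ≥ β_{T'}`, and `β_{T'} ≤ α_T + 1`, so taking `max` and `min` of
`Π(T ⊗ T')` with the identity recovers `T` and `T'`. Conversely, for `h ∈ T_{[1,ℓ]}` the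
positions with `h_p ≤ p` form an initial segment of `[1, ℓ]`; it ends at `α` of the first
sequence of `PiInv h`, which is exactly where `Π` switches from one sequence to the other. -/

theorem StrictMono.monotone_sub_coe {S : Set ℤ} [S.OrdConnected] {f : S → ℤ}
    (hf : StrictMono f) : Monotone fun p : S => f p - p := by
  rintro ⟨a, ha⟩ ⟨b, hb⟩ (hab : a ≤ b)
  induction b, hab using Int.leInduction with
  | base => exact le_rfl
  | succ b hab ih =>
    have hb' : b ∈ S := Set.OrdConnected.out ‹_› ha hb ⟨hab, by omega⟩
    have hstep : f ⟨b, hb'⟩ < f ⟨b + 1, hb⟩ := hf (Subtype.mk_lt_mk.mpr (lt_add_one b))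
    have := ih hb'
    dsimp only at this ⊢
    omega

section FixedPoints

variable {ℓ : ℤ} {f : Set.Iic ℓ → ℤ} {g : Set.Ici (1 : ℤ) → ℤ}

theorem le_alphaT_of_apply_eq {p : ℤ} (hp : p ≤ ℓ) (hfix : f ⟨p, hp⟩ = p) :
    p ≤ alphaT ℓ f :=
  le_csSup ⟨ℓ, by rintro q ⟨hq, -⟩; exact hq⟩ ⟨hp, hfix⟩

theorem betaT_le_of_apply_eq {p : ℤ} (hp : 1 ≤ p) (hfix : g ⟨p, hp⟩ = p) :
    betaT g ≤ p :=
  csInf_le ⟨1, by rintro q ⟨hq, -⟩; exact hq⟩ ⟨hp, hfix⟩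

namespace TPlus

theorem alphaT_mem (hf : f ∈ TPlus ℓ) : ∃ h : alphaT ℓ f ≤ ℓ, f ⟨alphaT ℓ f, h⟩ = alphaT ℓ f := by
  obtain ⟨-, N, hN⟩ := hf
  exact Int.csSup_mem (s := {p | ∃ h : p ≤ ℓ, f ⟨p, h⟩ = p})
    ⟨min N ℓ, min_le_right _ _, hN _ (min_le_left _ _)⟩ ⟨ℓ, by rintro q ⟨hq, -⟩; exact hq⟩

theorem le_apply (hf : f ∈ TPlus ℓ) (p : Set.Iic ℓ) : (p : ℤ) ≤ f p := by
  obtain ⟨hmono, N, hN⟩ := hf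
  let q : Set.Iic ℓ := ⟨min p N, Set.mem_Iic.mpr ((min_le_left _ _).trans p.2)⟩
  have hq : f q = q := hN q (min_le_right _ _)
  have : f q - q ≤ f p - p := hmono.monotone_sub_coe (Subtype.coe_le_coe.mp (min_le_left _ _))
  omega

theorem apply_eq_of_le_alphaT (hf : f ∈ TPlus ℓ) (p : Set.Iic ℓ) (hp : (p : ℤ) ≤ alphaT ℓ f) :
    f p = p := by
  obtain ⟨hα, hfix⟩ := alphaT_mem hf
  have : f p - p ≤ f ⟨alphaT ℓ f, hα⟩ - alphaT ℓ f := hf.1.monotone_sub_coe hp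
  have := le_apply hf p
  omega

end TPlus

namespace TMinus

theorem betaT_mem (hg : g ∈ TMinus) : ∃ h : 1 ≤ betaT g, g ⟨betaT g, h⟩ = betaT g := by
  obtain ⟨-, N, hN⟩ := hg
  exact Int.csInf_mem (s := {p | ∃ h : 1 ≤ p, g ⟨p, h⟩ = p})
    ⟨max N 1, le_max_right _ _, hN _ (le_max_left _ _)⟩ ⟨1, by rintro q ⟨hq, -⟩; exact hq⟩

theorem apply_le (hg : g ∈ TMinus) (p : Set.Ici (1 : ℤ)) : g p ≤ p := by
  obtain ⟨hmono, N, hN⟩ := hg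
  let q : Set.Ici (1 : ℤ) := ⟨max p N, Set.mem_Ici.mpr (p.2.trans (le_max_left _ _))⟩
  have hq : g q = q := hN q (le_max_right _ _)
  have : g p - p ≤ g q - q := hmono.monotone_sub_coe (Subtype.coe_le_coe.mp (le_max_left _ _))
  omega

theorem apply_eq_of_betaT_le (hg : g ∈ TMinus) (p : Set.Ici (1 : ℤ)) (hp : betaT g ≤ p) :
    g p = p := by
  obtain ⟨hβ, hfix⟩ := betaT_mem hg
  have : g ⟨betaT g, hβ⟩ - betaT g ≤ g p - p := hg.1.monotone_sub_coe hp
  have := apply_le hg p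
  omega

end TMinus

end FixedPoints

section PiInv

variable {ℓ : ℤ} {h : Set.Icc (1 : ℤ) ℓ → ℤ}

theorem PiInv_fst_apply (p : Set.Icc (1 : ℤ) ℓ) : (PiInv ℓ h).1 ⟨p, p.2.2⟩ = max (h p) p :=
  dif_pos p.2.1

theorem PiInv_fst_apply_of_lt_one (j : Set.Iic ℓ) (hj : (j : ℤ) < 1) : (PiInv ℓ h).1 j = j :=
  dif_neg hj.not_ge

theorem PiInv_snd_apply (p : Set.Icc (1 : ℤ) ℓ) : (PiInv ℓ h).2 ⟨p, p.2.1⟩ = min (h p) p :=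
  dif_pos p.2.2

theorem PiInv_snd_apply_of_lt (p : Set.Ici (1 : ℤ)) (hp : ℓ < p) : (PiInv ℓ h).2 p = p :=
  dif_neg hp.not_ge

theorem PiInv_fst_mem_TPlus (hh : StrictMono h) : (PiInv ℓ h).1 ∈ TPlus ℓ := by
  refine ⟨?_, 0, fun j hj => PiInv_fst_apply_of_lt_one j (by omega)⟩
  rintro ⟨i, hi⟩ ⟨j, hj⟩ (hij : i < j)
  by_cases hi1 : 1 ≤ i
  · rw [PiInv_fst_apply ⟨i, hi1, hi⟩, PiInv_fst_apply ⟨j, hi1.trans hij.le, hj⟩]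
    exact max_lt_max (hh hij) hij
  · rw [PiInv_fst_apply_of_lt_one ⟨i, hi⟩ (by simpa using hi1)]
    by_cases hj1 : 1 ≤ j
    · rw [PiInv_fst_apply ⟨j, hj1, hj⟩]
      exact hij.trans_le (le_max_right _ _)
    · rwa [PiInv_fst_apply_of_lt_one ⟨j, hj⟩ (by simpa using hj1)]

theorem PiInv_snd_mem_TMinus (hh : StrictMono h) : (PiInv ℓ h).2 ∈ TMinus := by
  refine ⟨?_, ℓ + 1, fun p hp => PiInv_snd_apply_of_lt p (by omega)⟩
  rintro ⟨i, hi⟩ ⟨j, hj⟩ (hij : i < j)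
  by_cases hiℓ : i ≤ ℓ
  · rw [PiInv_snd_apply ⟨i, hi, hiℓ⟩]
    by_cases hjℓ : j ≤ ℓ
    · rw [PiInv_snd_apply ⟨j, hj, hjℓ⟩]
      exact min_lt_min (hh hij) hij
    · rw [PiInv_snd_apply_of_lt ⟨j, hj⟩ (not_le.mp hjℓ)]
      exact (min_le_right _ _).trans_lt hij
  · rw [PiInv_snd_apply_of_lt ⟨i, hi⟩ (not_le.mp hiℓ),
      PiInv_snd_apply_of_lt ⟨j, hj⟩ (show ℓ < j by omega)]
    exact hij

theorem le_alphaT_PiInv_iff (hh : StrictMono h) (p : Set.Icc (1 : ℤ) ℓ) :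
    (p : ℤ) ≤ alphaT ℓ (PiInv ℓ h).1 ↔ h p ≤ p := by
  constructor
  · intro hp
    obtain ⟨hα, hfix⟩ := TPlus.alphaT_mem (PiInv_fst_mem_TPlus hh)
    set α := alphaT ℓ (PiInv ℓ h).1
    let a : Set.Icc (1 : ℤ) ℓ := ⟨α, p.2.1.trans hp, hα⟩
    have ha : h a ≤ α := max_eq_right_iff.mp ((PiInv_fst_apply a).symm.trans hfix)
    have : h p - p ≤ h a - α := hh.monotone_sub_coe (show p ≤ a from hp)
    omega
  · intro hp
    exact le_alphaT_of_apply_eq p.2.2 ((PiInv_fst_apply p).trans (max_eq_right hp))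

theorem PiMap_PiInv (hh : StrictMono h) : PiMap ℓ (PiInv ℓ h) = h := by
  funext p
  unfold PiMap
  split_ifs with hp
  · rw [PiInv_snd_apply]
    exact min_eq_left ((le_alphaT_PiInv_iff hh p).mp hp)
  · rw [PiInv_fst_apply]
    exact max_eq_left (le_of_not_ge (mt (le_alphaT_PiInv_iff hh p).mpr hp))

theorem betaT_PiInv_snd_sub_one_le (hh : StrictMono h) (hℓ : 0 ≤ ℓ) :
    betaT (PiInv ℓ h).2 - 1 ≤ alphaT ℓ (PiInv ℓ h).1 := by
  set α := alphaT ℓ (PiInv ℓ h).1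
  have hα0 : 0 ≤ α := le_alphaT_of_apply_eq hℓ (PiInv_fst_apply_of_lt_one ⟨0, hℓ⟩ zero_lt_one)
  suffices hfix : (PiInv ℓ h).2 ⟨α + 1, show 1 ≤ α + 1 by omega⟩ = α + 1 by
    have := betaT_le_of_apply_eq _ hfix
    omega
  by_cases hαℓ : α + 1 ≤ ℓ
  · let a : Set.Icc (1 : ℤ) ℓ := ⟨α + 1, by omega, hαℓ⟩
    have ha : ¬ h a ≤ a := fun hle => by
      have := (le_alphaT_PiInv_iff hh a).mpr hle
      dsimp only [a] at this
      omega
    exact (PiInv_snd_apply a).trans (min_eq_right (le_of_not_ge ha))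
  · exact PiInv_snd_apply_of_lt _ (not_le.mp hαℓ)

theorem PiInv_mem_TL (hh : StrictMono h) (hℓ : 0 ≤ ℓ) : PiInv ℓ h ∈ TL ℓ :=
  ⟨PiInv_fst_mem_TPlus hh, PiInv_snd_mem_TMinus hh, betaT_PiInv_snd_sub_one_le hh hℓ⟩

end PiInv

theorem PiInv_PiMap {ℓ : ℤ} {x : (Set.Iic ℓ → ℤ) × (Set.Ici (1 : ℤ) → ℤ)} (hx : x ∈ TL ℓ) :
    PiInv ℓ (PiMap ℓ x) = x := by
  obtain ⟨hf, hg, hβα⟩ := hx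
  obtain ⟨hβ1, -⟩ := TMinus.betaT_mem hg
  refine Prod.ext (funext fun ⟨j, hjℓ⟩ => ?_) (funext fun ⟨j, hj1⟩ => ?_)
  · by_cases hj1 : 1 ≤ j
    · rw [PiInv_fst_apply ⟨j, hj1, hjℓ⟩]
      unfold PiMap
      split_ifs with hjα
      · rw [TPlus.apply_eq_of_le_alphaT hf ⟨j, hjℓ⟩ hjα]
        exact max_eq_right (TMinus.apply_le hg ⟨j, hj1⟩)
      · exact max_eq_left (TPlus.le_apply hf ⟨j, hjℓ⟩)
    · rw [PiInv_fst_apply_of_lt_one ⟨j, hjℓ⟩ (by simpa using hj1),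
        TPlus.apply_eq_of_le_alphaT hf ⟨j, hjℓ⟩ (show j ≤ alphaT ℓ x.1 by omega)]
  · by_cases hjℓ : j ≤ ℓ
    · rw [PiInv_snd_apply ⟨j, hj1, hjℓ⟩]
      unfold PiMap
      split_ifs with hjα
      · exact min_eq_left (TMinus.apply_le hg ⟨j, hj1⟩)
      · have hjα : alphaT ℓ x.1 < j := not_le.mp hjα
        rw [TMinus.apply_eq_of_betaT_le hg ⟨j, hj1⟩ (show betaT x.2 ≤ j by omega)]
        exact min_eq_right (TPlus.le_apply hf ⟨j, hjℓ⟩)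
    · have hαℓ := (TPlus.alphaT_mem hf).1
      rw [PiInv_snd_apply_of_lt ⟨j, hj1⟩ (not_le.mp hjℓ),
        TMinus.apply_eq_of_betaT_le hg ⟨j, hj1⟩ (show betaT x.2 ≤ j by omega)]

/-- `PiInv` is the inverse of the bijection `Π : T_ℓ → T_{[1,ℓ]}`: for every
strictly increasing `ℓ`-tuple `h`, the pair `PiInv ℓ h` lies in `T_ℓ` (in particular
both sequences are strictly increasing, eventually the identity, and satisfy the
compatibility `α ≥ β − 1`) and `Π` applied to it recovers `h`; conversely
`PiInv ∘ Π = id` on `T_ℓ`. -/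
theorem PiInv_is_inverse (ℓ : ℤ) (hl : 1 ≤ ℓ) :
    (∀ h ∈ TRect ℓ, PiInv ℓ h ∈ TL ℓ ∧ PiMap ℓ (PiInv ℓ h) = h) ∧
    (∀ x ∈ TL ℓ, PiInv ℓ (PiMap ℓ x) = x) :=
  ⟨fun _ hh => ⟨PiInv_mem_TL hh (zero_le_one.trans hl), PiMap_PiInv hh⟩, fun _ => PiInv_PiMap⟩
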